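/- arXiv:1405.1484 — 2 statements merged into one kernel-verified Lean document; each statement's English description precedes it below -/
import Mathlib

section
/- Let n ≥ 3 be a prime and let G be the graph of Construction 1. For each l ∈ [n], the subgraph of G² induced by P^l is isomorphic to the complete multipartite graph K_{n*n} with partite sets P_1^l, …, P_n^l; equivalently, two distinct vertices v_{k,j}^l and v_{k',j'}^l of P^l are adjacent in G² if and only if k ≠ k'. -/
open SimpleGraph

/-- Entry of the Latin square `L_i`:  `L_i(j,k) ≡ j + i·(k-1) (mod n)`, with
indices and entries taken in `ZMod n` (identifying `[n] = {1,…,n}` with `ZMod n`). -/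
def latinL (n : ℕ) (i j k : ZMod n) : ZMod n := j + i * (k - 1)

/-- The vertices of the graph `G` of Construction 1:
`pv k m l` is `v_{k,m}^l ∈ P`, `qv i j` is `w_{i,j} ∈ Q` (with `i ≠ 0`, i.e. `i ∈ [n-1]`),
`rv i j` is `u_{i,j} ∈ R`, and `sv m` is `s_m ∈ S`. -/
inductive Vert (n : ℕ) : Type
  | pv (k m l : ZMod n) : Vert n
  | qv (i : {x : ZMod n // x ≠ 0}) (j : ZMod n) : Vert n
  | rv (i : {x : ZMod n // x ≠ 0}) (j : ZMod n) : Vert n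
  | sv (m : ZMod n) : Vert n

/-- One-directional description of the edges of Construction 1:
`w_{i,j}` is adjacent to `v_{k, L_i(j,k)}^l` for all `k, l`;
`u_{i,j}` is adjacent to every vertex of `T_{l, L_i(j,l)}` for every `l`;
`s_m` is adjacent to every vertex of `T_{l,m}` for every `l`. -/
def rel {n : ℕ} : Vert n → Vert n → Prop
  | .qv i j, .pv k m _ => m = latinL n i.1 j k
  | .rv i j, .pv _ m l => m = latinL n i.1 j l
  | .sv m', .pv _ m _ => m = m'
  | _, _ => False

/-- The bipartite graph `G` of Construction 1. -/
def GraphG (n : ℕ) : SimpleGraph (Vert n) where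
  Adj x y := rel x y ∨ rel y x
  symm := ⟨fun _ _ h => h.symm⟩
  loopless := by constructor; intro x h; cases x <;> simp [rel] at h

/-- The square `G²` of a graph `G`: two distinct vertices are adjacent iff
their distance in `G` is at most 2 (i.e. they are adjacent or have a common neighbor). -/
def square {V : Type*} (G : SimpleGraph V) : SimpleGraph V where
  Adj x y := x ≠ y ∧ (G.Adj x y ∨ ∃ z, G.Adj x z ∧ G.Adj z y)
  symm := by
    constructor
    rintro x y ⟨hxy, h | ⟨z, h1, h2⟩⟩
    · exact ⟨hxy.symm, Or.inl h.symm⟩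
    · exact ⟨hxy.symm, Or.inr ⟨z, h2.symm, h1.symm⟩⟩
  loopless := ⟨fun x h => h.1 rfl⟩

/-- `P_k^l = {v_{k,1}^l, …, v_{k,n}^l}`. -/
def Pkl (n : ℕ) (k l : ZMod n) : Set (Vert n) := {x | ∃ m, x = Vert.pv k m l}

/-- `P^l = P_1^l ∪ ⋯ ∪ P_n^l`. -/
def PlSet (n : ℕ) (l : ZMod n) : Set (Vert n) := {x | ∃ k m, x = Vert.pv k m l}

/-- `P = P^1 ∪ ⋯ ∪ P^n`. -/
def Pset (n : ℕ) : Set (Vert n) := {x | ∃ k m l, x = Vert.pv k m l}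

/-- `T_{l,m} = {v_{1,m}^l, …, v_{n,m}^l}`. -/
def Tlm (n : ℕ) (l m : ZMod n) : Set (Vert n) := {x | ∃ k, x = Vert.pv k m l}

/-- `Q_i = {w_{i,1}, …, w_{i,n}}`. -/
def QiSet (n : ℕ) (i : {x : ZMod n // x ≠ 0}) : Set (Vert n) := {x | ∃ j, x = Vert.qv i j}

/-- `Q = Q_1 ∪ ⋯ ∪ Q_{n-1}`. -/
def Qset (n : ℕ) : Set (Vert n) := {x | ∃ i j, x = Vert.qv i j}

/-- `R_i = {u_{i,1}, …, u_{i,n}}`. -/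
def RiSet (n : ℕ) (i : {x : ZMod n // x ≠ 0}) : Set (Vert n) := {x | ∃ j, x = Vert.rv i j}

/-- `R = R_1 ∪ ⋯ ∪ R_{n-1}`. -/
def Rset (n : ℕ) : Set (Vert n) := {x | ∃ i j, x = Vert.rv i j}

/-- `S = {s_1, …, s_n}`. -/
def Sset (n : ℕ) : Set (Vert n) := {x | ∃ m, x = Vert.sv m}

/-- `G_l`, the subgraph of `G` induced by `P^l ∪ Q` (kept on the same vertex type:
all edges of `G` with both endpoints in `P^l ∪ Q`). -/
def Gl (n : ℕ) (l : ZMod n) : SimpleGraph (Vert n) where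
  Adj x y := (GraphG n).Adj x y ∧ x ∈ PlSet n l ∪ Qset n ∧ y ∈ PlSet n l ∪ Qset n
  symm := ⟨fun _ _ ⟨h, hx, hy⟩ => ⟨h.symm, hy, hx⟩⟩
  loopless := ⟨fun x h => (GraphG n).irrefl h.1⟩

/-- `G` is `k`-choosable: for every list assignment with all lists of size at least `k`
there is a proper coloring choosing each color from the corresponding list. -/
def Choosable {V : Type*} (G : SimpleGraph V) (k : ℕ) : Prop :=
  ∀ L : V → Finset ℕ, (∀ v, k ≤ (L v).card) →
    ∃ φ : V → ℕ, (∀ v, φ v ∈ L v) ∧ ∀ ⦃v w⦄, G.Adj v w → φ v ≠ φ w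

/-- The list chromatic number `χ_ℓ(G)`: the least `k` such that `G` is `k`-choosable. -/
noncomputable def listChromaticNumber {V : Type*} (G : SimpleGraph V) : ℕ :=
  sInf {k | Choosable G k}


/-! Two vertices `v_{k,j}^l`, `v_{k',j'}^l` of `P^l` are never adjacent in the bipartite graph `G`,
so they are adjacent in `G²` exactly when they have a common neighbour. Inside one part
`P_k^l` this is impossible, since every vertex of `Q ∪ R ∪ S` has at most one neighbour in
`P_k^l`. Across parts `k ≠ k'` a common neighbour always exists: `s_j` if `j = j'`, and
otherwise `w_{i,·}` for the unique `i = (j - j')/(k - k')` in the field `ZMod n`, because the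
Latin squares `L_i` move linearly in the column `k` with slope `i`. -/

def SimpleGraph.Iso.ofCompleteMultipartiteGraph {V ι : Type*} {β : ι → Type*} {G : SimpleGraph V}
    (e : (Σ i, β i) ≃ V) (he : ∀ a b, G.Adj (e a) (e b) ↔ a.1 ≠ b.1) :
    completeMultipartiteGraph β ≃g G where
  toEquiv := e
  map_rel_iff' := by simp [he]

namespace GraphG

variable {n : ℕ}

theorem not_adj_pv_pv {k m l k' m' l' : ZMod n} :
    ¬ (GraphG n).Adj (.pv k m l) (.pv k' m' l') := by
  simp [GraphG, rel]

theorem adj_sv_pv (m k l : ZMod n) : (GraphG n).Adj (.sv m) (.pv k m l) :=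
  Or.inl rfl

theorem adj_qv_pv (i : {x : ZMod n // x ≠ 0}) (j k l : ZMod n) :
    (GraphG n).Adj (.qv i j) (.pv k (latinL n i j k) l) :=
  Or.inl rfl

theorem eq_of_adj_pv_of_adj_pv {z : Vert n} {k j j' l : ZMod n}
    (h : (GraphG n).Adj z (.pv k j l)) (h' : (GraphG n).Adj z (.pv k j' l)) : j = j' := by
  cases z <;> simp only [GraphG, rel, or_false] at h h' <;> rw [h, h']

theorem exists_adj_pv_adj_pv [Fact n.Prime] {k k' : ZMod n} (hk : k ≠ k') (j j' l : ZMod n) :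
    ∃ z, (GraphG n).Adj (.pv k j l) z ∧ (GraphG n).Adj z (.pv k' j' l) := by
  by_cases hj : j = j'
  · subst hj
    exact ⟨.sv j, (adj_sv_pv j k l).symm, adj_sv_pv j k' l⟩
  · have hk' : k - k' ≠ 0 := sub_ne_zero.mpr hk
    set i := (j - j') / (k - k')
    have hi : i ≠ 0 := div_ne_zero (sub_ne_zero.mpr hj) hk'
    set c := j - i * (k - 1)
    have hcol : latinL n i c k = j := by
      simp only [latinL, c]
      ring
    have hcol' : latinL n i c k' = j' := by
      simp only [latinL, c, i]
      field_simp
      ring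
    refine ⟨.qv ⟨i, hi⟩ c, ?_, ?_⟩
    · simpa only [hcol] using (adj_qv_pv ⟨i, hi⟩ c k l).symm
    · simpa only [hcol'] using adj_qv_pv ⟨i, hi⟩ c k' l

theorem square_adj_pv_pv_iff [Fact n.Prime] (k j k' j' l : ZMod n) :
    (square (GraphG n)).Adj (.pv k j l) (.pv k' j' l) ↔ k ≠ k' := by
  constructor
  · rintro ⟨hne, hadj | ⟨z, hz, hz'⟩⟩ rfl
    · exact not_adj_pv_pv hadj
    · exact hne (by rw [eq_of_adj_pv_of_adj_pv hz.symm hz'])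
  · intro hk
    exact ⟨by simp [hk], Or.inr (exists_adj_pv_adj_pv hk j j' l)⟩

end GraphG

noncomputable def sigmaFinEquivPlSet (n : ℕ) [NeZero n] (l : ZMod n) :
    (Σ _ : Fin n, Fin n) ≃ PlSet n l :=
  Equiv.ofBijective (fun a => ⟨.pv (ZMod.finEquiv n a.1) (ZMod.finEquiv n a.2) l, _, _, rfl⟩) <| by
    constructor
    · rintro ⟨k, m⟩ ⟨k', m'⟩ h
      obtain ⟨hk, hm, -⟩ := Vert.pv.inj (congrArg Subtype.val h)
      obtain rfl : k = k' := (ZMod.finEquiv n).injective hk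
      obtain rfl : m = m' := (ZMod.finEquiv n).injective hm
      rfl
    · rintro ⟨_, k, m, rfl⟩
      exact ⟨⟨(ZMod.finEquiv n).symm k, (ZMod.finEquiv n).symm m⟩, by simp⟩

@[simp]
theorem coe_sigmaFinEquivPlSet_apply (n : ℕ) [NeZero n] (l : ZMod n) (a : Σ _ : Fin n, Fin n) :
    (sigmaFinEquivPlSet n l a : Vert n) = .pv (ZMod.finEquiv n a.1) (ZMod.finEquiv n a.2) l :=
  rfl

theorem stmt_11_general (n : ℕ) (hn : n.Prime) (l : ZMod n) :
    Nonempty ((square (GraphG n)).induce (PlSet n l) ≃g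
      completeMultipartiteGraph (fun _ : Fin n => Fin n)) ∧
    ∀ k j k' j' : ZMod n,
      ((square (GraphG n)).Adj (Vert.pv k j l) (Vert.pv k' j' l) ↔ k ≠ k') := by
  have : Fact n.Prime := ⟨hn⟩
  have : NeZero n := ⟨hn.ne_zero⟩
  refine ⟨⟨(Iso.ofCompleteMultipartiteGraph (sigmaFinEquivPlSet n l) fun a b => ?_).symm⟩,
    fun k j k' j' => GraphG.square_adj_pv_pv_iff k j k' j' l⟩
  simp [GraphG.square_adj_pv_pv_iff]

/-- for each `l`, the subgraph of `G²` induced by `P^l` is isomorphic to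
the complete multipartite graph `K_{n*n}` with partite sets `P_1^l, …, P_n^l`;
equivalently, `v_{k,j}^l` and `v_{k',j'}^l` are adjacent in `G²` iff `k ≠ k'`. -/
theorem stmt_11 (n : ℕ) (hn : n.Prime) (hn3 : 3 ≤ n) (l : ZMod n) :
    Nonempty ((square (GraphG n)).induce (PlSet n l) ≃g
      completeMultipartiteGraph (fun _ : Fin n => Fin n)) ∧
    ∀ k j k' j' : ZMod n,
      ((square (GraphG n)).Adj (Vert.pv k j l) (Vert.pv k' j' l) ↔ k ≠ k') :=
  stmt_11_general n hn l
end

section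
/- For integers n, r ≥ 2, the list chromatic number of the complete multipartite graph K_{n*r} satisfies χ_ℓ(K_{n*r}) > (n−1)·⌊(2r−1)/n⌋. -/
open SimpleGraph

/-!
Give vertex `j` of every part the list of colours `c < n * k` with `c ≢ j (mod n)`; each list
has `(n - 1) * k` colours. In a proper colouring the parts use pairwise disjoint colour sets,
so if `n * k < 2 * r` some part is monochromatic, say of colour `c`. But the vertex
`c % n` of that part does not have `c` in its list.
-/

open Finset

theorem Choosable.mono {V : Type*} {G : SimpleGraph V} {k k' : ℕ} (h : Choosable G k)
    (hk : k ≤ k') : Choosable G k' :=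
  fun L hL => h L fun v => hk.trans (hL v)

theorem choosable_card {V : Type*} [Fintype V] (G : SimpleGraph V) :
    Choosable G (Fintype.card V) := by
  classical
  intro L hL
  have hall : ∀ s : Finset V, #s ≤ #(s.biUnion L) := by
    intro s
    rcases s.eq_empty_or_nonempty with rfl | ⟨x, hx⟩
    · simp
    · calc #s ≤ Fintype.card V := s.card_le_univ
        _ ≤ #(L x) := hL x
        _ ≤ #(s.biUnion L) := card_le_card (subset_biUnion_of_mem L hx)
  obtain ⟨φ, hinj, hmem⟩ := (all_card_le_biUnion_card_iff_exists_injective L).1 hall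
  exact ⟨φ, hmem, fun v w hvw h => G.ne_of_adj hvw (hinj h)⟩

theorem lt_listChromaticNumber_of_not_choosable {V : Type*} [Fintype V] {G : SimpleGraph V}
    {k : ℕ} (h : ¬ Choosable G k) : k < listChromaticNumber G := by
  by_contra! hle
  exact h (Choosable.mono (Nat.sInf_mem (s := {k | Choosable G k}) ⟨_, choosable_card G⟩) hle)

theorem exists_part_monochromatic {ι α : Type*} [Fintype ι] [DecidableEq α] {V : ι → Type*}
    [∀ i, Fintype (V i)] {φ : (Σ i, V i) → α} (C : Finset α) (hφC : ∀ v, φ v ∈ C)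
    (hφ : ∀ ⦃v w⦄, (completeMultipartiteGraph V).Adj v w → φ v ≠ φ w)
    (hC : #C < 2 * Fintype.card ι) : ∃ i, ∀ x y : V i, φ ⟨i, x⟩ = φ ⟨i, y⟩ := by
  set S : ι → Finset α := fun i => univ.image fun x => φ ⟨i, x⟩
  have hdisj : ((univ : Finset ι) : Set ι).PairwiseDisjoint S := by
    intro i _ i' _ hii'
    simp only [S, Function.onFun, Finset.disjoint_left, mem_image, mem_univ, true_and]
    rintro _ ⟨x, rfl⟩ ⟨y, hxy⟩
    exact hφ (v := ⟨i, x⟩) (w := ⟨i', y⟩) hii' hxy.symm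
  have hsum : ∑ i, #(S i) < ∑ _i : ι, 2 :=
    calc ∑ i, #(S i) = #(univ.biUnion S) := (card_biUnion hdisj).symm
      _ ≤ #C := card_le_card (biUnion_subset.2 fun i _ => image_subset_iff.2 fun x _ => hφC _)
      _ < ∑ _i : ι, 2 := by simpa [mul_comm] using hC
  obtain ⟨i, -, hi⟩ := exists_lt_of_sum_lt hsum
  exact ⟨i, fun x y => card_le_one.1 (Nat.lt_succ_iff.1 hi) _ (mem_image_of_mem _ (mem_univ x)) _
    (mem_image_of_mem _ (mem_univ y))⟩

theorem card_filter_range_mul_not_modEq {n : ℕ} (hn : 0 < n) (k j : ℕ) :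
    #{c ∈ range (n * k) | ¬ c ≡ j [MOD n]} = (n - 1) * k := by
  have hcount : #{c ∈ range (n * k) | c ≡ j [MOD n]} = k := by
    rw [← Nat.count_eq_card_filter_range, Nat.count_modEq_card _ hn, Nat.mul_mod_right]
    simp [hn.ne']
  rw [filter_not, card_sdiff_of_subset (filter_subset _ _), card_range, hcount, Nat.sub_one_mul]

theorem not_choosable_completeMultipartiteGraph {n r k : ℕ} (hn : 0 < n) (hk : n * k < 2 * r) :
    ¬ Choosable (completeMultipartiteGraph fun _ : Fin r => Fin n) ((n - 1) * k) := by
  intro hch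
  obtain ⟨φ, hφL, hφ⟩ := hch (fun v => {c ∈ range (n * k) | ¬ c ≡ v.2 [MOD n]})
    fun v => (card_filter_range_mul_not_modEq hn k v.2).ge
  obtain ⟨i, hi⟩ := exists_part_monochromatic (range (n * k))
    (fun v => (mem_filter.1 (hφL v)).1) hφ (by simpa using hk)
  set c := φ ⟨i, ⟨0, hn⟩⟩
  have hmiss := (mem_filter.1 (hφL ⟨i, ⟨c % n, Nat.mod_lt c hn⟩⟩)).2
  rw [hi _ ⟨0, hn⟩] at hmiss
  exact hmiss (Nat.mod_modEq c n).symm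

/-- for `n, r ≥ 2`, `χ_ℓ(K_{n*r}) > (n-1)·⌊(2r-1)/n⌋`. -/
theorem stmt_14 (n r : ℕ) (hn : 2 ≤ n) (hr : 2 ≤ r) :
    (n - 1) * ((2 * r - 1) / n) <
      listChromaticNumber (completeMultipartiteGraph fun _ : Fin r => Fin n) := by
  refine lt_listChromaticNumber_of_not_choosable
    (not_choosable_completeMultipartiteGraph (by omega) ?_)
  have hdiv := Nat.mul_div_le (2 * r - 1) n
  omega
end
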